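/- Shift relation for the shift (A₀,A₁,A₂,A₃) → (A₀+1,A₁+1,A₂,A₃) of the equation Z₃: let P = x(x−1)∂² + (−(A₀+A₁−2A₂−2)x + A₀−A₂−1)∂ + (A₀²+A₁²+A₂²−A₃²+1)/2 + A₀A₁ − A₂(A₀+A₁−1), and let Q = x(x−1)∂² + (−(A₀+A₁−2A₂−2)x + A₀−A₂−1 − (2x−1))∂ + (A₀²+A₁²+A₂²−A₃²+1)/2 + A₀A₁ − A₂(A₀+A₁−1) − (2A₂−A₀−A₁). Then for every function u holomorphic on an open set U ⊆ ℂ∖{0,1} and every x ∈ U, (Z₃(A₀+1,A₁+1,A₂,A₃)(P u))(x) = (Q (Z₃(A₀,A₁,A₂,A₃) u))(x). -/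

import Mathlib

/-!
On normally ordered operators `∑ cₖ(x) ∂ᵏ` with polynomial coefficients, left composition with
`∂` acts by `L ↦ L' + ∂ L` (Leibniz rule; `L'` differentiates the coefficients). Hence for `u`
analytic near `x`, applying `Z` to `L u` is applying the normally ordered composite `Z ∘ L` to `u`,
and the shift relation reduces to the operator identity
`Z₃(A₀+1,A₁+1,A₂,A₃) ∘ P = Q ∘ Z₃(A₀,A₁,A₂,A₃)` in `ℂ[x][∂]`, a finite computation.
-/

/-- The operator Z₃(A₀,A₁,A₂,A₃) acting on a function u. -/
noncomputable def Z3op (A0 A1 A2 A3 : ℂ) (u : ℂ → ℂ) : ℂ → ℂ := fun x =>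
  x^2*(x - 1)^2 * iteratedDeriv 3 u x
  + x*(2*x - 1)*(x - 1)*(3 + 2*A2) * iteratedDeriv 2 u x
  + ((5*A2^2 - A3^2 + 12*A2 + 7)*x^2 + (A0^2 - A1^2 - 5*A2^2 + A3^2 - 12*A2 - 7)*x
      - (A0 + 1 + A2)*(A0 - 1 - A2)) * deriv u x
  + ((2*A2 + 1)*(-A3 + A2 + 1)*(A3 + A2 + 1)*x
      + (2*A2 + 1)*(A0^2 - A1^2 - A2^2 + A3^2 - 2*A2 - 1)/2) * u x

/-- The shift operator P for (1,1,0,0) acting on a function u. -/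
noncomputable def P1100 (A0 A1 A2 A3 : ℂ) (u : ℂ → ℂ) : ℂ → ℂ := fun x =>
  x*(x - 1) * iteratedDeriv 2 u x
  + (-(A0 + A1 - 2*A2 - 2)*x + A0 - A2 - 1) * deriv u x
  + ((A0^2 + A1^2 + A2^2 - A3^2 + 1)/2 + A0*A1 - A2*(A0 + A1 - 1)) * u x

/-- The shift operator Q for (1,1,0,0) acting on a function u. -/
noncomputable def Q1100 (A0 A1 A2 A3 : ℂ) (u : ℂ → ℂ) : ℂ → ℂ := fun x =>
  x*(x - 1) * iteratedDeriv 2 u x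
  + (-(A0 + A1 - 2*A2 - 2)*x + A0 - A2 - 1 - (2*x - 1)) * deriv u x
  + ((A0^2 + A1^2 + A2^2 - A3^2 + 1)/2 + A0*A1 - A2*(A0 + A1 - 1)
      - (2*A2 - A0 - A1)) * u x

open Polynomial

/-- `∑ cₖ(x) ∂ᵏ` is encoded as `∑ C cₖ * X ^ k`: the outer variable is `∂`. -/
abbrev DiffOp (R : Type*) [CommRing R] := R[X][X]

namespace DiffOp

section CommRing

variable {R : Type*} [CommRing R]

noncomputable def coeffDeriv : Derivation R (DiffOp R) (DiffOp R) :=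
  PolynomialModule.equivPolynomialSelf.compDer (derivative' : Derivation R R[X] R[X]).mapCoeffs

lemma coeff_coeffDeriv (L : DiffOp R) (k : ℕ) :
    (coeffDeriv L).coeff k = derivative (L.coeff k) :=
  rfl

lemma coeffDeriv_monomial (k : ℕ) (c : R[X]) :
    coeffDeriv (monomial k c) = monomial k (derivative c) := by
  ext1 i
  rw [coeff_coeffDeriv, coeff_monomial, coeff_monomial]
  split_ifs <;> simp

lemma coeffDeriv_X : coeffDeriv (X : DiffOp R) = 0 := by
  rw [← monomial_one_one_eq_X, coeffDeriv_monomial, derivative_one, map_zero]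

/-- `∂ ∘ L`. -/
noncomputable def derivComp (L : DiffOp R) : DiffOp R := coeffDeriv L + X * L

lemma derivComp_add (L M : DiffOp R) : derivComp (L + M) = derivComp L + derivComp M := by
  rw [derivComp, derivComp, derivComp, map_add, mul_add, add_add_add_comm]

lemma derivComp_monomial (k : ℕ) (c : R[X]) :
    derivComp (monomial k c) = monomial k (derivative c) + monomial (k + 1) c := by
  rw [derivComp, coeffDeriv_monomial, X_mul_monomial]

noncomputable def compose (Z L : DiffOp R) : DiffOp R := Z.sum fun k c => C c * derivComp^[k] L

lemma add_compose (Z Z' L : DiffOp R) : compose (Z + Z') L = compose Z L + compose Z' L :=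
  sum_add_index _ _ _ (fun _ => by simp) (fun _ _ _ => by simp [add_mul])

lemma monomial_compose (k : ℕ) (c : R[X]) (L : DiffOp R) :
    compose (monomial k c) L = C c * derivComp^[k] L :=
  sum_monomial_index _ _ (by simp)

end CommRing

section Apply

variable {𝕜 : Type*} [NontriviallyNormedField 𝕜]

noncomputable def apply (L : DiffOp 𝕜) (u : 𝕜 → 𝕜) (y : 𝕜) : 𝕜 :=
  L.sum fun k c => c.eval y * iteratedDeriv k u y

lemma apply_add (L M : DiffOp 𝕜) (u : 𝕜 → 𝕜) (y : 𝕜) :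
    apply (L + M) u y = apply L u y + apply M u y :=
  sum_add_index _ _ _ (fun _ => by simp) (fun _ _ _ => by simp [add_mul])

lemma apply_monomial (k : ℕ) (c : 𝕜[X]) (u : 𝕜 → 𝕜) (y : 𝕜) :
    apply (monomial k c) u y = c.eval y * iteratedDeriv k u y :=
  sum_monomial_index _ _ (by simp)

lemma apply_C_mul (c : 𝕜[X]) (L : DiffOp 𝕜) (u : 𝕜 → 𝕜) (y : 𝕜) :
    apply (C c * L) u y = c.eval y * apply L u y := by
  induction L using Polynomial.induction_on' with
  | add L M hL hM => rw [mul_add, apply_add, apply_add, hL, hM, mul_add]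
  | monomial k d => rw [C_mul_monomial, apply_monomial, apply_monomial, eval_mul, mul_assoc]

lemma hasDerivAt_apply (L : DiffOp 𝕜) {u : 𝕜 → 𝕜} {y : 𝕜}
    (hu : ∀ k, DifferentiableAt 𝕜 (iteratedDeriv k u) y) :
    HasDerivAt (apply L u) (apply (derivComp L) u y) y := by
  induction L using Polynomial.induction_on' with
  | add L M hL hM =>
    have hsum : apply (L + M) u = fun z => apply L u z + apply M u z := funext (apply_add L M u)
    rw [hsum, derivComp_add, apply_add]
    exact hL.add hM
  | monomial k c =>
    have hmon : apply (monomial k c) u = fun z => c.eval z * iteratedDeriv k u z :=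
      funext (apply_monomial k c u)
    have hk : HasDerivAt (iteratedDeriv k u) (iteratedDeriv (k + 1) u y) y := by
      rw [iteratedDeriv_succ]
      exact (hu k).hasDerivAt
    rw [hmon, derivComp_monomial, apply_add, apply_monomial, apply_monomial]
    exact (c.hasDerivAt y).mul hk

variable [CompleteSpace 𝕜]

lemma iteratedDeriv_apply (L : DiffOp 𝕜) {u : 𝕜 → 𝕜} {y : 𝕜} (hu : AnalyticAt 𝕜 u y) (n : ℕ) :
    iteratedDeriv n (apply L u) y = apply (derivComp^[n] L) u y := by
  induction n generalizing y with
  | zero => simp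
  | succ n ih =>
    have h : iteratedDeriv n (apply L u) =ᶠ[nhds y] apply (derivComp^[n] L) u :=
      hu.eventually_analyticAt.mono fun z hz => ih hz
    rw [iteratedDeriv_succ, h.deriv_eq, Function.iterate_succ_apply']
    refine (hasDerivAt_apply _ fun k => ?_).deriv
    rw [iteratedDeriv_eq_iterate]
    exact (hu.iterated_deriv k).differentiableAt

lemma apply_compose (Z L : DiffOp 𝕜) {u : 𝕜 → 𝕜} {y : 𝕜} (hu : AnalyticAt 𝕜 u y) :
    apply (compose Z L) u y = apply Z (apply L u) y := by
  induction Z using Polynomial.induction_on' with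
  | add Z Z' hZ hZ' => rw [add_compose, apply_add, apply_add, hZ, hZ']
  | monomial k c => rw [monomial_compose, apply_C_mul, apply_monomial, iteratedDeriv_apply L hu]

end Apply

end DiffOp

section ShiftRelation

open DiffOp

noncomputable def z3DiffOp (A0 A1 A2 A3 : ℂ) : DiffOp ℂ :=
  monomial 3 (X ^ 2 * (X - 1) ^ 2) + monomial 2 (X * (2 * X - 1) * (X - 1) * C (3 + 2 * A2))
  + monomial 1 (C (5 * A2 ^ 2 - A3 ^ 2 + 12 * A2 + 7) * X ^ 2
      + C (A0 ^ 2 - A1 ^ 2 - 5 * A2 ^ 2 + A3 ^ 2 - 12 * A2 - 7) * X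
      - C ((A0 + 1 + A2) * (A0 - 1 - A2)))
  + monomial 0 (C ((2 * A2 + 1) * (-A3 + A2 + 1) * (A3 + A2 + 1)) * X
      + C ((2 * A2 + 1) * (A0 ^ 2 - A1 ^ 2 - A2 ^ 2 + A3 ^ 2 - 2 * A2 - 1) / 2))

noncomputable def p1100DiffOp (A0 A1 A2 A3 : ℂ) : DiffOp ℂ :=
  monomial 2 (X * (X - 1)) + monomial 1 (C (-(A0 + A1 - 2 * A2 - 2)) * X + C (A0 - A2 - 1))
  + monomial 0 (C ((A0 ^ 2 + A1 ^ 2 + A2 ^ 2 - A3 ^ 2 + 1) / 2 + A0 * A1 - A2 * (A0 + A1 - 1)))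

noncomputable def q1100DiffOp (A0 A1 A2 A3 : ℂ) : DiffOp ℂ :=
  monomial 2 (X * (X - 1))
  + monomial 1 (C (-(A0 + A1 - 2 * A2 - 2)) * X + C (A0 - A2 - 1) - (2 * X - 1))
  + monomial 0 (C ((A0 ^ 2 + A1 ^ 2 + A2 ^ 2 - A3 ^ 2 + 1) / 2 + A0 * A1 - A2 * (A0 + A1 - 1)
      - (2 * A2 - A0 - A1)))

lemma Z3op_eq_apply (A0 A1 A2 A3 : ℂ) (u : ℂ → ℂ) :
    Z3op A0 A1 A2 A3 u = apply (z3DiffOp A0 A1 A2 A3) u := by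
  funext y
  simp only [Z3op, z3DiffOp, apply_add, apply_monomial, eval_add, eval_sub, eval_mul, eval_pow,
    eval_X, eval_C, eval_one, eval_ofNat, iteratedDeriv_one, iteratedDeriv_zero]

lemma P1100_eq_apply (A0 A1 A2 A3 : ℂ) (u : ℂ → ℂ) :
    P1100 A0 A1 A2 A3 u = apply (p1100DiffOp A0 A1 A2 A3) u := by
  funext y
  simp only [P1100, p1100DiffOp, apply_add, apply_monomial, eval_add, eval_mul, eval_sub, eval_X,
    eval_C, eval_one, iteratedDeriv_one, iteratedDeriv_zero]
  ring

lemma Q1100_eq_apply (A0 A1 A2 A3 : ℂ) (u : ℂ → ℂ) :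
    Q1100 A0 A1 A2 A3 u = apply (q1100DiffOp A0 A1 A2 A3) u := by
  funext y
  simp only [Q1100, q1100DiffOp, apply_add, apply_monomial, eval_add, eval_mul, eval_sub, eval_X,
    eval_C, eval_one, eval_ofNat, iteratedDeriv_one, iteratedDeriv_zero]
  ring

lemma algebraMap_C_C (a : ℂ) :
    algebraMap ℂ[X][X] (FractionRing ℂ[X][X]) (C (C a)) = algebraMap ℂ _ a := by
  rw [IsScalarTower.algebraMap_apply ℂ ℂ[X][X], Polynomial.algebraMap_apply,
    Polynomial.algebraMap_apply, Algebra.algebraMap_self, RingHom.id_apply]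

theorem z3DiffOp_compose_p1100DiffOp (A0 A1 A2 A3 : ℂ) :
    compose (z3DiffOp (A0 + 1) (A1 + 1) A2 A3) (p1100DiffOp A0 A1 A2 A3)
      = compose (q1100DiffOp A0 A1 A2 A3) (z3DiffOp A0 A1 A2 A3) := by
  simp only [z3DiffOp, p1100DiffOp, q1100DiffOp, add_compose, monomial_compose,
    Function.iterate_succ_apply', Function.iterate_zero_apply, derivComp, map_add,
    Derivation.leibniz, coeffDeriv_monomial, coeffDeriv_X, smul_eq_mul]
  simp only [derivative_mul, derivative_X, derivative_C, derivative_sub, derivative_add,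
    derivative_one, derivative_pow, derivative_ofNat, map_zero, Nat.reduceSub, zero_mul, mul_zero,
    add_zero, zero_add, sub_zero, mul_one, one_mul, Nat.cast_ofNat, pow_one]
  simp only [← C_mul_X_pow_eq_monomial]
  -- `ring` cannot cancel the `2⁻¹` inside `C (C (_ / 2))` in the non-field `ℂ[X][X]`.
  apply IsFractionRing.injective ℂ[X][X] (FractionRing ℂ[X][X])
  simp only [map_add, map_mul, map_sub, map_neg, map_pow, map_ofNat, map_one, algebraMap_C_C,
    map_div₀]
  ring

end ShiftRelation

theorem Z3_shift_1100_general (A0 A1 A2 A3 : ℂ) (U : Set ℂ) (hU : IsOpen U)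
    (u : ℂ → ℂ) (hu : DifferentiableOn ℂ u U) (x : ℂ) (hx : x ∈ U) :
    Z3op (A0 + 1) (A1 + 1) A2 A3 (P1100 A0 A1 A2 A3 u) x
      = Q1100 A0 A1 A2 A3 (Z3op A0 A1 A2 A3 u) x := by
  have hux : AnalyticAt ℂ u x := hu.analyticAt (hU.mem_nhds hx)
  rw [Z3op_eq_apply, P1100_eq_apply, Q1100_eq_apply, Z3op_eq_apply, ← DiffOp.apply_compose _ _ hux,
    ← DiffOp.apply_compose _ _ hux, z3DiffOp_compose_p1100DiffOp]

theorem Z3_shift_1100 (A0 A1 A2 A3 : ℂ) (U : Set ℂ) (hU : IsOpen U)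
    (hU0 : (0 : ℂ) ∉ U) (hU1 : (1 : ℂ) ∉ U)
    (u : ℂ → ℂ) (hu : DifferentiableOn ℂ u U) (x : ℂ) (hx : x ∈ U) :
    Z3op (A0 + 1) (A1 + 1) A2 A3 (P1100 A0 A1 A2 A3 u) x
      = Q1100 A0 A1 A2 A3 (Z3op A0 A1 A2 A3 u) x :=
  Z3_shift_1100_general A0 A1 A2 A3 U hU u hu x hx
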